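/- For every k ≥ 3 and odd m ≥ 3, the star-critical Gallai-Ramsey number gr_k^*(K_3 : K_{1,m}) equals m. -/

import Mathlib

def RainbowTri {V : Type} {k : ℕ} (Adj : V → V → Prop) (c : V → V → Fin k) : Prop :=
  ∃ a b d : V, Adj a b ∧ Adj a d ∧ Adj b d ∧
    c a b ≠ c a d ∧ c a b ≠ c b d ∧ c a d ≠ c b d

def MonoTri {V : Type} {k : ℕ} (Adj : V → V → Prop) (c : V → V → Fin k) : Prop :=
  ∃ a b d : V, a ≠ b ∧ a ≠ d ∧ b ≠ d ∧ Adj a b ∧ Adj a d ∧ Adj b d ∧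
    c a b = c a d ∧ c a d = c b d

def MonoP4 {V : Type} {k : ℕ} (Adj : V → V → Prop) (c : V → V → Fin k) : Prop :=
  ∃ a b d e : V, a ≠ b ∧ a ≠ d ∧ a ≠ e ∧ b ≠ d ∧ b ≠ e ∧ d ≠ e ∧
    Adj a b ∧ Adj b d ∧ Adj d e ∧ c a b = c b d ∧ c b d = c d e

def MonoC4 {V : Type} {k : ℕ} (Adj : V → V → Prop) (c : V → V → Fin k) : Prop :=
  ∃ a b d e : V, a ≠ b ∧ a ≠ d ∧ a ≠ e ∧ b ≠ d ∧ b ≠ e ∧ d ≠ e ∧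
    Adj a b ∧ Adj b d ∧ Adj d e ∧ Adj e a ∧
    c a b = c b d ∧ c b d = c d e ∧ c d e = c e a

def MonoClique {V : Type} {k : ℕ} [DecidableEq V] (Adj : V → V → Prop)
    (c : V → V → Fin k) (p : ℕ) (i : Fin k) : Prop :=
  ∃ S : Finset V, S.card = p ∧ ∀ a ∈ S, ∀ b ∈ S, a ≠ b → Adj a b ∧ c a b = i

def MonoStar {V : Type} {k : ℕ} [DecidableEq V] (Adj : V → V → Prop)
    (c : V → V → Fin k) (m : ℕ) (i : Fin k) : Prop :=
  ∃ v : V, ∃ S : Finset V, S.card = m ∧ v ∉ S ∧ ∀ u ∈ S, Adj v u ∧ c v u = i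

def Full {V : Type} : V → V → Prop := fun a b => a ≠ b

def OAdj {m : ℕ} (A : Finset (Fin m)) : Option (Fin m) → Option (Fin m) → Prop
  | some i, some j => i ≠ j
  | some i, none   => i ∈ A
  | none,   some j => j ∈ A
  | none,   none   => False

def IsGallaiPartition {n k q : ℕ} (c : Fin n → Fin n → Fin k)
    (P : Fin q → Finset (Fin n)) : Prop :=
  2 ≤ q ∧ (∀ i, (P i).Nonempty) ∧ (∀ i j, i ≠ j → Disjoint (P i) (P j)) ∧
  (∀ x : Fin n, ∃ i, x ∈ P i) ∧
  (∀ i j, i ≠ j → ∃ col : Fin k, ∀ a ∈ P i, ∀ b ∈ P j, c a b = col) ∧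
  (∃ c1 c2 : Fin k, ∀ i j, i ≠ j → ∀ a ∈ P i, ∀ b ∈ P j, c a b = c1 ∨ c a b = c2)

def MonoCopy {W V : Type} {k : ℕ} (H : SimpleGraph W) (Adj : V → V → Prop)
    (c : V → V → Fin k) (i : Fin k) : Prop :=
  ∃ φ : W → V, Function.Injective φ ∧
    ∀ a b, H.Adj a b → Adj (φ a) (φ b) ∧ c (φ a) (φ b) = i

def MonoMergeCopy {W V : Type} {k : ℕ} (H : SimpleGraph W)
    (c : V → V → Fin k) (i : Fin k) : Prop :=
  ∃ φ : W → V, ∀ a b, H.Adj a b → φ a ≠ φ b ∧ c (φ a) (φ b) = i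

/-!
Write `m = 2t + 1`: the graph is `K_{5t}` plus a vertex `v` joined to a set `A`.

Let `|A| = m` and suppose there is neither a rainbow triangle nor a monochromatic `K_{1,m}`;
then every vertex of `K_{5t}` has at most `2t` neighbours of each colour. By Gallai's theorem
there are two colours `x`, `y` such that the edges of all other colours leave `K_{5t}`
disconnected, and all edges between two of its components then have one colour, `x` or `y`.
A vertex sees at most `4t` vertices outside its component, so every component has at least `t`
vertices, and a vertex that sees two other components in one colour bounds their total size
by `2t`. This forces every component to have exactly `t` vertices, and then every vertex has
`2t` neighbours of colour `x` and `2t` of colour `y` outside its component. So for `a`, `b ∈ A`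
in different components the triangle `v a b` forces `c(v,a) = c(v,b)`, as otherwise `a` or `b`
becomes the centre of a monochromatic star with `2t + 1` leaves; since `A` meets at least two
components, `v` sees all of `A` in one colour.

For `|A| ≤ 2t`, blow up the colouring of `K₅` by two complementary pentagons into parts of
size `t` and use a third colour inside the parts and at `v`: every colour class then has
maximum degree at most `2t`.
-/

section Gallai

variable {V κ : Type*}

def IsGallaiOn (c : V → V → κ) (S : Finset V) : Prop :=
  ∀ a ∈ S, ∀ b ∈ S, ∀ d ∈ S, a ≠ b → a ≠ d → b ≠ d →
    c a b = c a d ∨ c a b = c b d ∨ c a d = c b d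

def Linked (c : V → V → κ) (S : Finset V) (x y : κ) : V → V → Prop :=
  Relation.ReflTransGen fun a b => a ∈ S ∧ b ∈ S ∧ c a b ≠ x ∧ c a b ≠ y

variable {c : V → V → κ} {S : Finset V} {x y : κ} {a b : V}

theorem eq_or_eq_of_mem_pair {u v w : κ} (hu : u = x ∨ u = y) (hv : v = x ∨ v = y)
    (hw : w = x ∨ w = y) (huv : u ≠ v) : w = u ∨ w = v := by
  rcases hu with rfl | rfl <;> rcases hv with rfl | rfl <;> rcases hw with rfl | rfl <;> simp_all

theorem IsGallaiOn.mono {T : Finset V} (h : IsGallaiOn c S) (hT : T ⊆ S) : IsGallaiOn c T :=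
  fun a ha b hb d hd => h a (hT ha) b (hT hb) d (hT hd)

theorem Linked.symm (hc : ∀ a b, c a b = c b a) (h : Linked c S x y a b) :
    Linked c S x y b a := by
  have : Std.Symm fun a b => a ∈ S ∧ b ∈ S ∧ c a b ≠ x ∧ c a b ≠ y :=
    ⟨fun a b ⟨ha, hb, hx, hy⟩ => ⟨hb, ha, hc a b ▸ hx, hc a b ▸ hy⟩⟩
  exact Relation.ReflTransGen.stdSymm.symm a b h

theorem Linked.trans {d : V} (hab : Linked c S x y a b) (hbd : Linked c S x y b d) :
    Linked c S x y a d :=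
  Relation.ReflTransGen.trans hab hbd

theorem Linked.mem (ha : a ∈ S) (h : Linked c S x y a b) : b ∈ S := by
  induction h with
  | refl => exact ha
  | tail _ step _ => exact step.2.1

theorem exists_not_linked_of_not_linked (hc : ∀ a b, c a b = c b a) {a₀ b₀ : V}
    (h : ¬ Linked c S x y a₀ b₀) (a : V) : ∃ b, ¬ Linked c S x y a b := by
  by_contra! H
  exact h (((H a₀).symm hc).trans (H b₀))

theorem color_mem_of_not_linked (ha : a ∈ S) (hb : b ∈ S) (h : ¬ Linked c S x y a b) :
    c a b = x ∨ c a b = y := by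
  by_contra! hxy
  exact h (.single ⟨ha, hb, hxy⟩)

theorem color_ne_of_not_linked (ha : a ∈ S) (hb : b ∈ S) (h : ¬ Linked c S x y a b) {γ : κ}
    (hx : γ ≠ x) (hy : γ ≠ y) : c a b ≠ γ := by
  rintro rfl
  rcases color_mem_of_not_linked ha hb h with h' | h'
  exacts [hx h', hy h']

theorem color_eq_of_linked_left (hg : IsGallaiOn c S) {a₀ : V} (hb : b ∈ S)
    (hb₀ : ¬ Linked c S x y a₀ b) (h : Linked c S x y a₀ a) : c a b = c a₀ b := by
  induction h with
  | refl => rfl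
  | @tail a' a'' h₀ step ih =>
    obtain ⟨ha', ha'', hx, hy⟩ := step
    have hb' : ¬ Linked c S x y a' b := fun h => hb₀ (h₀.trans h)
    have hb'' : ¬ Linked c S x y a'' b := fun h => hb₀ ((h₀.tail ⟨ha', ha'', hx, hy⟩).trans h)
    rw [← ih]
    by_cases ha : a' = a''
    · rw [ha]
    have hne' : a' ≠ b := fun h => hb' (h ▸ .refl)
    have hne'' : a'' ≠ b := fun h => hb'' (h ▸ .refl)
    rcases hg a' ha' a'' ha'' b hb ha hne' hne'' with h | h | h
    · exact absurd h.symm (color_ne_of_not_linked ha' hb hb' hx hy)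
    · exact absurd h.symm (color_ne_of_not_linked ha'' hb hb'' hx hy)
    · exact h.symm

theorem color_eq_of_not_linked (hc : ∀ a b, c a b = c b a) (hg : IsGallaiOn c S) {a₀ b₀ : V}
    (ha₀ : a₀ ∈ S) (hb₀ : b₀ ∈ S) (h : ¬ Linked c S x y a₀ b₀)
    (ha : Linked c S x y a₀ a) (hb : Linked c S x y b₀ b) : c a b = c a₀ b₀ := by
  have hb' : ¬ Linked c S x y a₀ b := fun h' => h (h'.trans (hb.symm hc))
  rw [color_eq_of_linked_left hg (hb.mem hb₀) hb' ha, hc,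
    color_eq_of_linked_left hg ha₀ (fun h' => h (h'.symm hc)) hb, hc]

end Gallai

section GallaiTheorem

variable {V κ : Type*} [DecidableEq V] {c : V → V → κ} {S : Finset V} {x y : κ} {v : V}

theorem eq_of_linked_insert (hv : ∀ z ∈ S, c v z = x ∨ c v z = y) {w : V}
    (h : Linked c (insert v S) x y v w) : w = v := by
  induction h with
  | refl => rfl
  | @tail w w' _ step ih =>
    subst ih
    obtain ⟨-, hw', hx, hy⟩ := step
    rcases Finset.mem_insert.mp hw' with rfl | hw'
    · rfl
    · rcases hv w' hw' with h | h <;> contradiction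

theorem linked_insert_cases (hc : ∀ a b, c a b = c b a) (hg : IsGallaiOn c (insert v S))
    (hv : v ∉ S) {z₀ : V} (hz₀ : z₀ ∈ S) (hx : c v z₀ ≠ x) (hy : c v z₀ ≠ y) {w : V}
    (h : Linked c (insert v S) x y v w) : w = v ∨ ∃ u, Linked c S x y w u ∧ c v u = c v z₀ := by
  induction h with
  | refl => exact .inl rfl
  | @tail w w' _ step ih =>
    obtain ⟨hw, hw', hwx, hwy⟩ := step
    rcases Finset.mem_insert.mp hw' with rfl | hw'S
    · exact .inl rfl
    right
    rcases Finset.mem_insert.mp hw with rfl | hwS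
    · by_cases hγ : c w w' = c w z₀
      · exact ⟨w', .refl, hγ⟩
      by_cases hl : Linked c S x y w' z₀
      · exact ⟨z₀, hl, rfl⟩
      have hl' : ¬ Linked c S x y z₀ w' := fun h => hl (h.symm hc)
      have hne : z₀ ≠ w' := fun h => hl (h ▸ .refl)
      have hvz : w ≠ z₀ := fun h => hv (h ▸ hz₀)
      have hvw : w ≠ w' := fun h => hv (h ▸ hw'S)
      rcases hg w (by simp) z₀ (by simp [hz₀]) w' (by simp [hw'S]) hvz hvw hne with h | h | h
      · exact absurd h.symm hγ
      · exact absurd h.symm (color_ne_of_not_linked hz₀ hw'S hl' hx hy)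
      · exact absurd h.symm (color_ne_of_not_linked hz₀ hw'S hl' hwx hwy)
    · rcases ih with rfl | ⟨u, hwu, hu⟩
      · exact absurd hwS hv
      exact ⟨u, .head ⟨hw'S, hwS, hc w w' ▸ hwx, hc w w' ▸ hwy⟩ hwu, hu⟩

theorem exists_forall_linked_color_ne (hc : ∀ a b, c a b = c b a)
    (hg : IsGallaiOn c (insert v S)) (hv : v ∉ S) {a b : V} (ha : a ∈ S) (hb : b ∈ S)
    (hab : ¬ Linked c S x y a b) (h3 : ∀ x' y', ∃ z ∈ S, c v z ≠ x' ∧ c v z ≠ y') {γ : κ}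
    (hx : γ ≠ x) (hy : γ ≠ y) : ∃ z ∈ S, ∀ u, Linked c S x y z u → c v u ≠ γ := by
  by_contra! H
  have hgS := hg.mono (Finset.subset_insert v S)
  -- every component now contains a `γ`-neighbour `u` of `v`, and the triangle `v u z` shows
  -- that `v` sends to `z` the colour joining the component of `z` to any other component
  have key : ∀ z ∈ S, ∀ w ∈ S, ¬ Linked c S x y z w → c v z ≠ γ → c v z = c z w := by
    intro z hz w hw hzw hvz
    obtain ⟨u, hwu, hu⟩ := H w hw
    have huS := hwu.mem hw
    have hzu : ¬ Linked c S x y z u := fun h => hzw (h.trans (hwu.symm hc))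
    have hne : u ≠ z := fun h => hzu (h ▸ .refl)
    have hvu : v ≠ u := fun h => hv (h ▸ huS)
    have hvz' : v ≠ z := fun h => hv (h ▸ hz)
    have huz : c u z = c z w := by
      rw [hc z w, ← color_eq_of_not_linked hc hgS hw hz (fun h => hzw (h.symm hc)) hwu .refl]
    rcases hg v (by simp) u (by simp [huS]) z (by simp [hz]) hvu hvz' hne with h | h | h
    · exact absurd (hu ▸ h).symm hvz
    · exact absurd (hu ▸ h).symm (color_ne_of_not_linked huS hz (fun h => hzu (h.symm hc)) hx hy)
    · rw [h, huz]
  obtain ⟨z₁, hz₁, hz₁γ, -⟩ := h3 γ γ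
  obtain ⟨z₂, hz₂, hz₂γ, hz₂₁⟩ := h3 γ (c v z₁)
  apply hz₂₁
  by_cases h₁₂ : Linked c S x y z₁ z₂
  · obtain ⟨w, hw, hzw⟩ : ∃ w ∈ S, ¬ Linked c S x y z₁ w := by
      by_contra! h
      exact hab (((h a ha).symm hc).trans (h b hb))
    rw [key z₁ hz₁ w hw hzw hz₁γ, key z₂ hz₂ w hw (fun h => hzw (h₁₂.trans h)) hz₂γ,
      color_eq_of_not_linked hc hgS hz₁ hw hzw h₁₂ .refl]
  · rw [key z₁ hz₁ z₂ hz₂ h₁₂ hz₁γ, key z₂ hz₂ z₁ hz₁ (fun h => h₁₂ (h.symm hc)) hz₂γ, hc]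

/-- Gallai's theorem, in the form: removing the edges of some two colours disconnects `S`. -/
theorem IsGallaiOn.exists_not_linked (hc : ∀ a b, c a b = c b a) (hg : IsGallaiOn c S)
    (hS : 2 ≤ S.card) : ∃ x y : κ, ∃ a ∈ S, ∃ b ∈ S, ¬ Linked c S x y a b := by
  induction S using Finset.induction_on with
  | empty => simp at hS
  | @insert v S hv ih =>
    rw [Finset.card_insert_of_notMem hv] at hS
    by_cases h2 : ∃ x y, ∀ z ∈ S, c v z = x ∨ c v z = y
    · obtain ⟨x, y, hxy⟩ := h2
      obtain ⟨b, hb⟩ := Finset.card_pos.mp (by omega : 0 < S.card)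
      exact ⟨x, y, v, by simp, b, by simp [hb],
        fun h => hv (eq_of_linked_insert hxy h ▸ hb)⟩
    push Not at h2
    have hS2 : 2 ≤ S.card := by
      by_contra! hS1
      obtain ⟨z, hz⟩ := Finset.card_pos.mp (by omega : 0 < S.card)
      obtain ⟨z', hz', hne, -⟩ := h2 (c v z) (c v z)
      exact hne (by rw [Finset.card_le_one.mp (by omega) z' hz' z hz])
    obtain ⟨x, y, a, ha, b, hb, hab⟩ := ih (hg.mono (Finset.subset_insert v S)) hS2
    obtain ⟨z₀, hz₀, hx, hy⟩ := h2 x y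
    obtain ⟨z, hz, hzγ⟩ := exists_forall_linked_color_ne hc hg hv ha hb hab h2 hx hy
    refine ⟨x, y, v, by simp, z, by simp [hz], fun h => ?_⟩
    rcases linked_insert_cases hc hg hv hz₀ hx hy h with rfl | ⟨u, hzu, hu⟩
    · exact hv hz
    · exact hzγ u hzu hu

end GallaiTheorem

section Components

open Finset

variable {V κ : Type*} [Fintype V] {c : V → V → κ} {x y : κ} {t : ℕ} {a b a₀ b₀ : V}

open Classical in
noncomputable def linkedClass (c : V → V → κ) (x y : κ) (a : V) : Finset V :=
  {b | Linked c univ x y a b}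

theorem mem_linkedClass : b ∈ linkedClass c x y a ↔ Linked c univ x y a b := by
  simp [linkedClass]

theorem disjoint_linkedClass (hc : ∀ a b, c a b = c b a) (h : ¬ Linked c univ x y a b) :
    Disjoint (linkedClass c x y a) (linkedClass c x y b) := by
  rw [disjoint_left]
  intro d hda hdb
  rw [mem_linkedClass] at hda hdb
  exact h (hda.trans (hdb.symm hc))

theorem eq_of_forall_not_linked_eq (hc : ∀ a b, c a b = c b a) {β : Type*} {A : Finset V}
    {f : V → β} (hA : ∀ a, #(linkedClass c x y a) < #A)
    (hf : ∀ a ∈ A, ∀ b ∈ A, ¬ Linked c univ x y a b → f a = f b) (ha : a ∈ A) (hb : b ∈ A) :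
    f b = f a := by
  obtain ⟨d, hd, hda⟩ := exists_mem_notMem_of_card_lt_card (hA a)
  rw [mem_linkedClass] at hda
  by_cases hba : Linked c univ x y b a
  · rw [hf b hb d hd fun h => hda ((hba.symm hc).trans h), hf a ha d hd hda]
  · exact hf b hb a ha hba

variable [DecidableEq V] [DecidableEq κ]

def colorNbhd (c : V → V → κ) (a : V) (i : κ) : Finset V := {b | b ≠ a ∧ c a b = i}

theorem mem_colorNbhd {i : κ} : b ∈ colorNbhd c a i ↔ b ≠ a ∧ c a b = i := by
  simp [colorNbhd]

theorem linkedClass_subset_colorNbhd (hc : ∀ a b, c a b = c b a) (hg : IsGallaiOn c univ)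
    (h : ¬ Linked c univ x y b a) : linkedClass c x y a ⊆ colorNbhd c b (c b a) := by
  intro a' ha'
  rw [mem_linkedClass] at ha'
  refine mem_colorNbhd.mpr ⟨fun h' => h ((h' ▸ ha').symm hc), ?_⟩
  rw [color_eq_of_not_linked hc hg (mem_univ b) (mem_univ a) h .refl ha']

theorem card_sub_card_linkedClass_le (a : V) :
    Fintype.card V - #(linkedClass c x y a) ≤ #(colorNbhd c a x) + #(colorNbhd c a y) := by
  rw [← card_compl]
  refine (card_le_card fun b hb => ?_).trans (card_union_le _ _)
  rw [mem_compl, mem_linkedClass] at hb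
  have hne : b ≠ a := fun h => hb (h ▸ .refl)
  rcases color_mem_of_not_linked (mem_univ a) (mem_univ b) hb with h | h
  · exact mem_union_left _ (mem_colorNbhd.mpr ⟨hne, h⟩)
  · exact mem_union_right _ (mem_colorNbhd.mpr ⟨hne, h⟩)

theorem card_linkedClass_le_two_mul (hc : ∀ a b, c a b = c b a) (hg : IsGallaiOn c univ)
    (hdeg : ∀ a i, #(colorNbhd c a i) ≤ 2 * t) (h₀ : ¬ Linked c univ x y a₀ b₀) (a : V) :
    #(linkedClass c x y a) ≤ 2 * t := by
  obtain ⟨b, hb⟩ := exists_not_linked_of_not_linked hc h₀ a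
  exact (card_le_card (linkedClass_subset_colorNbhd hc hg fun h => hb (h.symm hc))).trans
    (hdeg b _)

theorem le_card_linkedClass (hdeg : ∀ a i, #(colorNbhd c a i) ≤ 2 * t)
    (hV : Fintype.card V = 5 * t) (a : V) : t ≤ #(linkedClass c x y a) := by
  have := card_sub_card_linkedClass_le (c := c) (x := x) (y := y) a
  have := hdeg a x
  have := hdeg a y
  omega

theorem card_linkedClass_add_le (hc : ∀ a b, c a b = c b a) (hg : IsGallaiOn c univ)
    (hdeg : ∀ a i, #(colorNbhd c a i) ≤ 2 * t) {p q r : V} (hpq : ¬ Linked c univ x y p q)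
    (hpr : ¬ Linked c univ x y p r) (hqr : ¬ Linked c univ x y q r) (h : c p q = c p r) :
    #(linkedClass c x y q) + #(linkedClass c x y r) ≤ 2 * t := by
  rw [← card_union_of_disjoint (disjoint_linkedClass hc hqr)]
  refine (card_le_card (union_subset ?_ ?_)).trans (hdeg p (c p q))
  · exact linkedClass_subset_colorNbhd hc hg hpq
  · exact h ▸ linkedClass_subset_colorNbhd hc hg hpr

/-- Otherwise `b` or `b₀` would see the component of `a` and another component, more than `2t`
vertices together, in one colour. -/
theorem color_eq_of_lt_card_linkedClass (hc : ∀ a b, c a b = c b a) (hg : IsGallaiOn c univ)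
    (hdeg : ∀ a i, #(colorNbhd c a i) ≤ 2 * t) (hV : Fintype.card V = 5 * t)
    (hbig : t < #(linkedClass c x y a)) (hb : ¬ Linked c univ x y a b)
    (hb₀ : ¬ Linked c univ x y a b₀) : c a b = c a b₀ := by
  by_cases hbb₀ : Linked c univ x y b₀ b
  · exact color_eq_of_not_linked hc hg (mem_univ a) (mem_univ b₀) hb₀ .refl hbb₀
  by_contra hne
  have hba : ¬ Linked c univ x y b a := fun h => hb (h.symm hc)
  have hbb₀' : ¬ Linked c univ x y b b₀ := fun h => hbb₀ (h.symm hc)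
  have hlarge d : 2 * t < #(linkedClass c x y a) + #(linkedClass c x y d) := by
    have := le_card_linkedClass (x := x) (y := y) hdeg hV d
    omega
  rcases eq_or_eq_of_mem_pair (color_mem_of_not_linked (mem_univ a) (mem_univ b) hb)
    (color_mem_of_not_linked (mem_univ a) (mem_univ b₀) hb₀)
    (color_mem_of_not_linked (mem_univ b) (mem_univ b₀) hbb₀') hne with h | h
  · exact (hlarge b₀).not_ge (card_linkedClass_add_le hc hg hdeg hba hbb₀' hb₀ (by rw [h, hc]))
  · exact (hlarge b).not_ge (card_linkedClass_add_le hc hg hdeg (fun h => hb₀ (h.symm hc))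
      hbb₀ hb (by rw [hc, ← h, hc]))

theorem card_linkedClass_le (hc : ∀ a b, c a b = c b a) (hg : IsGallaiOn c univ)
    (hdeg : ∀ a i, #(colorNbhd c a i) ≤ 2 * t) (hV : Fintype.card V = 5 * t)
    (h₀ : ¬ Linked c univ x y a₀ b₀) (a : V) : #(linkedClass c x y a) ≤ t := by
  by_contra! hbig
  obtain ⟨b₀, hb₀⟩ := exists_not_linked_of_not_linked hc h₀ a
  have hcompl : (linkedClass c x y a)ᶜ ⊆ colorNbhd c a (c a b₀) := by
    intro b hb
    rw [mem_compl, mem_linkedClass] at hb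
    exact mem_colorNbhd.mpr ⟨fun h => hb (h ▸ .refl),
      color_eq_of_lt_card_linkedClass hc hg hdeg hV hbig hb hb₀⟩
  have := card_le_card hcompl
  rw [card_compl, hV] at this
  have := hdeg a (c a b₀)
  have := card_linkedClass_le_two_mul hc hg hdeg h₀ a
  omega

theorem two_mul_le_card_colorNbhd (hc : ∀ a b, c a b = c b a) (hg : IsGallaiOn c univ)
    (hdeg : ∀ a i, #(colorNbhd c a i) ≤ 2 * t) (hV : Fintype.card V = 5 * t)
    (h₀ : ¬ Linked c univ x y a₀ b₀) (hab : ¬ Linked c univ x y a b) :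
    2 * t ≤ #(colorNbhd c a (c a b)) := by
  have := card_sub_card_linkedClass_le (c := c) (x := x) (y := y) a
  have := card_linkedClass_le hc hg hdeg hV h₀ a
  have := hdeg a x
  have := hdeg a y
  rcases color_mem_of_not_linked (mem_univ a) (mem_univ b) hab with h | h <;> rw [h] <;> omega

end Components

section Stars

open Finset

theorem monoStar_of_le_card {V : Type} [DecidableEq V] {k m : ℕ} {Adj : V → V → Prop}
    {c : V → V → Fin k} {i : Fin k} {v : V} {T : Finset V} (hv : v ∉ T)
    (hT : ∀ u ∈ T, Adj v u ∧ c v u = i) (hm : m ≤ #T) : MonoStar Adj c m i := by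
  obtain ⟨T', hT', rfl⟩ := exists_subset_card_eq hm
  exact ⟨v, T', rfl, fun h => hv (hT' h), fun u hu => hT u (hT' hu)⟩

abbrev innerColoring {W κ : Type*} (c : Option W → Option W → κ) : W → W → κ :=
  fun a b => c (some a) (some b)

variable {k N : ℕ} {A : Finset (Fin N)} {c : Option (Fin N) → Option (Fin N) → Fin k} {m : ℕ}

theorem isGallaiOn_of_not_rainbowTri (h : ¬ RainbowTri (OAdj A) c) :
    IsGallaiOn (innerColoring c) univ := by
  intro a _ b _ d _ hab had hbd
  by_contra! hne
  exact h ⟨some a, some b, some d, hab, had, hbd, hne⟩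

theorem card_colorNbhd_lt_of_not_monoStar (h : ∀ i, ¬ MonoStar (OAdj A) c m i) (a : Fin N)
    (i : Fin k) : #(colorNbhd (innerColoring c) a i) < m := by
  by_contra! hm
  refine h i (monoStar_of_le_card (v := some a)
    (T := (colorNbhd (innerColoring c) a i).map .some) (by simp [mem_colorNbhd]) ?_
    (by rwa [card_map]))
  simp only [mem_map, Function.Embedding.some_apply]
  rintro _ ⟨b, hb, rfl⟩
  exact ⟨Ne.symm (mem_colorNbhd.mp hb).1, (mem_colorNbhd.mp hb).2⟩

theorem card_colorNbhd_add_one_lt_of_not_monoStar (h : ∀ i, ¬ MonoStar (OAdj A) c m i)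
    {a : Fin N} (ha : a ∈ A) :
    #(colorNbhd (innerColoring c) a (c (some a) none)) + 1 < m := by
  by_contra! hm
  refine h (c (some a) none) (monoStar_of_le_card (v := some a)
    (T := insert none ((colorNbhd (innerColoring c) a (c (some a) none)).map .some))
    (by simp [mem_colorNbhd]) ?_ (by rwa [card_insert_of_notMem (by simp), card_map]))
  simp only [mem_insert, mem_map, Function.Embedding.some_apply]
  rintro _ (rfl | ⟨b, hb, rfl⟩)
  · exact ⟨ha, rfl⟩
  · exact ⟨Ne.symm (mem_colorNbhd.mp hb).1, (mem_colorNbhd.mp hb).2⟩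

end Stars

open Finset in
theorem rainbowTri_or_monoStar {k t : ℕ} {A : Finset (Fin (5 * t))}
    {c : Option (Fin (5 * t)) → Option (Fin (5 * t)) → Fin k} (hA : #A = 2 * t + 1)
    (hc : ∀ a b, c a b = c b a) :
    RainbowTri (OAdj A) c ∨ ∃ i, MonoStar (OAdj A) c (2 * t + 1) i := by
  by_contra! h
  obtain ⟨hr, hs⟩ := h
  have hc' : ∀ a b, innerColoring c a b = innerColoring c b a := fun a b => hc _ _
  have hg := isGallaiOn_of_not_rainbowTri hr
  have hdeg a i : #(colorNbhd (innerColoring c) a i) ≤ 2 * t :=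
    Nat.lt_succ_iff.mp (card_colorNbhd_lt_of_not_monoStar hs a i)
  have hV : Fintype.card (Fin (5 * t)) = 5 * t := Fintype.card_fin _
  have hA' := card_le_univ A
  obtain ⟨x, y, a₀, -, b₀, -, h₀⟩ := hg.exists_not_linked hc' (by rw [card_univ]; omega)
  -- an edge `ab` between components coloured like `av` would make `a` the centre of a star
  -- of size `2t + 1`
  have hsat {a b : Fin (5 * t)} (ha : a ∈ A) (hab : ¬ Linked (innerColoring c) univ x y a b) :
      c (some a) none ≠ c (some a) (some b) := fun h => by
    have : 2 * t ≤ #(colorNbhd (innerColoring c) a (c (some a) (some b))) :=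
      two_mul_le_card_colorNbhd hc' hg hdeg hV h₀ hab
    have := card_colorNbhd_add_one_lt_of_not_monoStar hs ha
    rw [h] at this
    omega
  have hkey : ∀ a ∈ A, ∀ b ∈ A, ¬ Linked (innerColoring c) univ x y a b →
      c none (some a) = c none (some b) := by
    intro a ha b hb hab
    by_contra hne
    have hab' : a ≠ b := fun h => hab (h ▸ .refl)
    refine hr ⟨none, some a, some b, ha, hb, hab', hne, fun h => hsat ha hab ?_, fun h => ?_⟩
    · rwa [hc]
    · exact hsat hb (fun h => hab (h.symm hc')) (by rw [hc, h, hc])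
  obtain ⟨a, ha⟩ := card_pos.mp (by omega : 0 < #A)
  refine hs (c none (some a)) (monoStar_of_le_card (v := none) (T := A.map .some) (by simp) ?_
    (by rw [card_map, hA]))
  simp only [mem_map, Function.Embedding.some_apply]
  rintro _ ⟨z, hz, rfl⟩
  refine ⟨hz, eq_of_forall_not_linked_eq hc' (fun a => ?_) hkey ha hz⟩
  have := card_linkedClass_le_two_mul hc' hg hdeg h₀ a
  omega

section LowerBound

open Finset

/-- Colour `0` on the pentagon `0 1 2 3 4`, colour `1` on the complementary pentagon, and
colour `2` on the diagonal. -/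
def pentagonColor (p q : Fin 5) : Fin 3 :=
  if p = q then 2 else if p - q = 1 ∨ q - p = 1 then 0 else 1

theorem pentagonColor_self (p : Fin 5) : pentagonColor p p = 2 := by
  simp [pentagonColor]

theorem pentagonColor_comm (p q : Fin 5) : pentagonColor p q = pentagonColor q p := by
  revert p q; decide

theorem pentagonColor_not_rainbow (p q r : Fin 5) :
    pentagonColor p q = pentagonColor p r ∨ pentagonColor p q = pentagonColor q r ∨
      pentagonColor p r = pentagonColor q r := by
  revert p q r; decide

theorem eq_of_pentagonColor_eq_two {p q : Fin 5} (h : pentagonColor p q = 2) : p = q := by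
  revert p q; decide

theorem card_pentagonColor_le {p r : Fin 5} (h : r ≠ p) :
    #{q | pentagonColor p q = pentagonColor p r} ≤ 2 := by
  revert p r; decide

def blowupPart (t : ℕ) (a : Fin (5 * t)) : Fin 5 :=
  ⟨a / t, Nat.div_lt_of_lt_mul (by have := a.isLt; omega)⟩

variable {t k : ℕ}

theorem card_blowupPart_eq_le (p : Fin 5) : #{a : Fin (5 * t) | blowupPart t a = p} ≤ t := by
  refine (card_le_card_of_injOn (fun a => a.val % t) (t := range t) ?_ ?_).trans_eq
    (card_range t)
  · intro a _
    simp only [coe_range, Set.mem_Iio]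
    exact Nat.mod_lt _ (by have := a.isLt; omega)
  · intro a ha b hb (hab : a.val % t = b.val % t)
    simp only [coe_filter, mem_univ, true_and, Set.mem_ofPred_eq] at ha hb
    have hdiv : a.val / t = b.val / t := congrArg Fin.val (ha.trans hb.symm)
    exact Fin.ext (by rw [← Nat.div_add_mod a t, ← Nat.div_add_mod b t, hdiv, hab])

theorem card_blowupPart_mem_le (P : Finset (Fin 5)) :
    #{a : Fin (5 * t) | blowupPart t a ∈ P} ≤ #P * t := by
  refine (card_le_mul_card_image (f := blowupPart t) _ t fun p _ => ?_).trans ?_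
  · exact (card_le_card (filter_subset_filter _ (filter_subset _ _))).trans
      (card_blowupPart_eq_le p)
  · rw [mul_comm]
    refine Nat.mul_le_mul_right t (card_le_card fun p hp => ?_)
    obtain ⟨a, ha, rfl⟩ := mem_image.mp hp
    exact (mem_filter.mp ha).2

def blowupColoring (hk : 3 ≤ k) (t : ℕ) : Option (Fin (5 * t)) → Option (Fin (5 * t)) → Fin k
  | some a, some b => Fin.castLE hk (pentagonColor (blowupPart t a) (blowupPart t b))
  | _, _ => Fin.castLE hk 2

variable (hk : 3 ≤ k)

theorem card_castLE_pentagonColor_le (p : Fin 5) {i : Fin k} (hi : i ≠ Fin.castLE hk 2) :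
    #{q | Fin.castLE hk (pentagonColor p q) = i} ≤ 2 := by
  rcases eq_empty_or_nonempty ({q | Fin.castLE hk (pentagonColor p q) = i} : Finset _)
    with h | ⟨r, hr⟩
  · simp [h]
  rw [mem_filter] at hr
  have hrp : r ≠ p := by
    rintro rfl
    exact hi (by rw [← hr.2, pentagonColor_self])
  refine (card_le_card fun q hq => ?_).trans (card_pentagonColor_le hrp)
  rw [mem_filter] at hq ⊢
  exact ⟨hq.1, Fin.castLE_injective hk (hq.2.trans hr.2.symm)⟩

theorem blowupColoring_none_left (w : Option (Fin (5 * t))) :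
    blowupColoring hk t none w = Fin.castLE hk 2 := by
  cases w <;> rfl

theorem blowupColoring_none_right (w : Option (Fin (5 * t))) :
    blowupColoring hk t w none = Fin.castLE hk 2 := by
  cases w <;> rfl

theorem blowupColoring_comm (u w : Option (Fin (5 * t))) :
    blowupColoring hk t u w = blowupColoring hk t w u := by
  cases u <;> cases w <;> simp [blowupColoring, pentagonColor_comm]

theorem not_rainbowTri_blowupColoring (A : Finset (Fin (5 * t))) :
    ¬ RainbowTri (OAdj A) (blowupColoring hk t) := by
  rintro ⟨a, b, d, -, -, -, h₁, h₂, h₃⟩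
  cases a with
  | none => exact h₁ (by simp [blowupColoring_none_left])
  | some a => cases b with
    | none => exact h₂ (by simp [blowupColoring_none_left, blowupColoring_none_right])
    | some b => cases d with
      | none => exact h₃ (by simp [blowupColoring_none_right])
      | some d =>
        simp only [blowupColoring, ne_eq, Fin.castLE_inj] at h₁ h₂ h₃
        rcases pentagonColor_not_rainbow (blowupPart t a) (blowupPart t b) (blowupPart t d)
          with h | h | h <;> contradiction

theorem card_le_of_blowupColoring_eq_two {a : Fin (5 * t)} {T : Finset (Option (Fin (5 * t)))}
    (hT : ∀ w ∈ T, blowupColoring hk t (some a) w = Fin.castLE hk 2) : #T ≤ t + 1 := by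
  have hsub : T ⊆ insert none (({b | blowupPart t b = blowupPart t a} : Finset _).map .some) := by
    intro w hw
    cases w with
    | none => exact mem_insert_self _ _
    | some b =>
      have := eq_of_pentagonColor_eq_two (Fin.castLE_injective hk (hT _ hw))
      exact mem_insert_of_mem (mem_map_of_mem _ (by simp [this]))
  have := (card_le_card hsub).trans (card_insert_le _ _)
  rw [card_map] at this
  have := card_blowupPart_eq_le (t := t) (blowupPart t a)
  omega

theorem card_le_of_blowupColoring_eq {a : Fin (5 * t)} {T : Finset (Option (Fin (5 * t)))}
    {i : Fin k} (hi : i ≠ Fin.castLE hk 2) (hT : ∀ w ∈ T, blowupColoring hk t (some a) w = i) :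
    #T ≤ 2 * t := by
  have hsub : T ⊆ ({b | blowupPart t b ∈
      ({q | Fin.castLE hk (pentagonColor (blowupPart t a) q) = i} : Finset _)} : Finset _).map
      .some := by
    intro w hw
    cases w with
    | none => exact absurd (blowupColoring_none_right hk _ ▸ hT _ hw).symm hi
    | some b => exact mem_map_of_mem _ (by simpa [blowupColoring] using hT _ hw)
  have := (card_le_card hsub).trans_eq (card_map _) |>.trans (card_blowupPart_mem_le _)
  have := Nat.mul_le_mul_right t (card_castLE_pentagonColor_le hk (blowupPart t a) hi)
  omega

theorem not_monoStar_blowupColoring {A : Finset (Fin (5 * t))} (hA : #A ≤ 2 * t) (i : Fin k) :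
    ¬ MonoStar (OAdj A) (blowupColoring hk t) (2 * t + 1) i := by
  rintro ⟨u, T, hT, -, hTu⟩
  cases u with
  | none =>
    have hsub : T ⊆ A.map .some := by
      intro w hw
      cases w with
      | none => exact absurd (hTu none hw).1 id
      | some b => exact mem_map_of_mem _ (hTu _ hw).1
    have := card_le_card hsub
    rw [card_map] at this
    omega
  | some a =>
    by_cases hi : i = Fin.castLE hk 2
    · have := card_le_of_blowupColoring_eq_two hk fun w hw => (hTu w hw).2.trans hi
      have := a.isLt
      omega
    · have := card_le_of_blowupColoring_eq hk hi fun w hw => (hTu w hw).2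
      omega

end LowerBound

theorem stmt15_general (k m : ℕ) (hk : 3 ≤ k) (hodd : Odd m) :
    IsLeast {s | ∀ A : Finset (Fin ((5 * m - 3) / 2 - 1)), A.card = s →
      ∀ c : Option (Fin ((5 * m - 3) / 2 - 1)) →
            Option (Fin ((5 * m - 3) / 2 - 1)) → Fin k,
        (∀ a b, c a b = c b a) →
        RainbowTri (OAdj A) c ∨ ∃ i, MonoStar (OAdj A) c m i} m := by
  obtain ⟨t, rfl⟩ := hodd
  rw [show (5 * (2 * t + 1) - 3) / 2 - 1 = 5 * t by omega]
  refine ⟨fun A hA c hc => rainbowTri_or_monoStar hA hc, fun s hs => ?_⟩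
  by_contra! hlt
  obtain ⟨A, -, hA⟩ := Finset.exists_subset_card_eq (s := (Finset.univ : Finset (Fin (5 * t))))
    (n := s) (by rw [Finset.card_univ, Fintype.card_fin]; omega)
  rcases hs A hA (blowupColoring hk t) (blowupColoring_comm hk) with h | ⟨i, h⟩
  · exact not_rainbowTri_blowupColoring hk A h
  · exact not_monoStar_blowupColoring hk (by omega) i h

theorem stmt15 (k m : ℕ) (hk : 3 ≤ k) (hm : 3 ≤ m) (hodd : Odd m) :
    IsLeast {s | ∀ A : Finset (Fin ((5 * m - 3) / 2 - 1)), A.card = s →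
      ∀ c : Option (Fin ((5 * m - 3) / 2 - 1)) →
            Option (Fin ((5 * m - 3) / 2 - 1)) → Fin k,
        (∀ a b, c a b = c b a) →
        RainbowTri (OAdj A) c ∨ ∃ i, MonoStar (OAdj A) c m i} m :=
  stmt15_general k m hk hodd
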